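/- Let P ⊆ ℝ² be a finite set in which all pairwise distances between distinct points are distinct, let ε ∈ (0,1), and let U, V ⊆ P be nonempty disjoint subsets that are ε-well-separated. If a Euclidean minimum spanning tree of P contains an edge {p, q} with p ∈ U and q ∈ V, then (p, q) is the closest pair between U and V, i.e., ‖p − q‖ = dist(U, V). -/

import Mathlib

/-- The distance between two sets of points: the infimum of pairwise distances. -/
noncomputable def setDist (U V : Set (EuclideanSpace ℝ (Fin 2))) : ℝ :=
  sInf (Set.image2 dist U V)

/-- The total edge length of a graph on a finite planar point set. -/
noncomputable def totalLength {P : Finset (EuclideanSpace ℝ (Fin 2))}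
    (G : SimpleGraph ↥P) : ℝ :=
  ∑ᶠ e ∈ G.edgeSet,
    Sym2.lift ⟨fun (p q : ↥P) =>
      dist (p : EuclideanSpace ℝ (Fin 2)) (q : EuclideanSpace ℝ (Fin 2)),
      fun _ _ => dist_comm _ _⟩ e

/-- `T` is a Euclidean minimum spanning tree of `P`: a connected acyclic graph on vertex
set `P` whose total edge length is minimal among all connected graphs on vertex set `P`. -/
def IsEMST (P : Finset (EuclideanSpace ℝ (Fin 2))) (T : SimpleGraph ↥P) : Prop :=
  T.Connected ∧ T.IsAcyclic ∧
    ∀ G : SimpleGraph ↥P, G.Connected → totalLength T ≤ totalLength G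

/-!
Cut property: removing an edge `pq` from a spanning tree `T` splits the vertices into the side
of `p` and the side of `q`, and adding back any edge `ab` across the cut yields a connected
graph of total length `len T - |pq| + |ab|`; minimality of `T` forces `|pq| ≤ |ab|`.

Let `(u, v)` be a closest pair of `U × V`. If `v` lies on the side of `p`, the cross edge
`vq` gives `|pq| ≤ |vq| ≤ diam V ≤ ε · dist(U, V) ≤ dist(U, V)`; symmetrically if `u` lies
on the side of `q`; otherwise `uv` crosses the cut and `|pq| ≤ |uv| = dist(U, V)`.
-/

namespace SimpleGraph

variable {V : Type*} {G T : SimpleGraph V} {p q : V}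

theorem Walk.reachable_deleteEdges_or {u v : V} (w : G.Walk u v) :
    (G.deleteEdges {s(p, q)}).Reachable u v ∨ (G.deleteEdges {s(p, q)}).Reachable u p ∨
      (G.deleteEdges {s(p, q)}).Reachable u q := by
  induction w with
  | nil => exact Or.inl .rfl
  | @cons u v _ huv _ ih =>
    by_cases he : s(u, v) = s(p, q)
    · rcases Sym2.eq_iff.mp he with ⟨rfl, -⟩ | ⟨rfl, -⟩
      · exact Or.inr (Or.inl .rfl)
      · exact Or.inr (Or.inr .rfl)
    · have huv' : (G.deleteEdges {s(p, q)}).Adj u v := (deleteEdges_adj ..).mpr ⟨huv, he⟩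
      exact ih.imp huv'.reachable.trans (Or.imp huv'.reachable.trans huv'.reachable.trans)

theorem Connected.reachable_deleteEdges_or (hG : G.Connected) (x : V) :
    (G.deleteEdges {s(p, q)}).Reachable p x ∨ (G.deleteEdges {s(p, q)}).Reachable q x := by
  obtain ⟨w⟩ := hG x p
  rcases w.reachable_deleteEdges_or (p := p) (q := q) with h | h | h
  exacts [.inl h.symm, .inl h.symm, .inr h.symm]

theorem finsum_edgeSet_deleteEdges_sup_edge [Finite V] {M : Type*} [AddCommMonoid M]
    (w : Sym2 V → M) (hpq : G.Adj p q) {a b : V} (hab : a ≠ b)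
    (hnew : ¬ (G.deleteEdges {s(p, q)}).Adj a b) :
    (∑ᶠ e ∈ (G.deleteEdges {s(p, q)} ⊔ edge a b).edgeSet, w e) + w s(p, q) =
      (∑ᶠ e ∈ G.edgeSet, w e) + w s(a, b) := by
  have hrest : s(p, q) ∉ G.edgeSet \ {s(p, q)} := fun h => h.2 rfl
  have hnew' : s(a, b) ∉ G.edgeSet \ {s(p, q)} := by
    rwa [← edgeSet_deleteEdges]
  have hsplit :
      ∑ᶠ e ∈ G.edgeSet, w e = w s(p, q) + ∑ᶠ e ∈ G.edgeSet \ {s(p, q)}, w e := by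
    rw [← finsum_mem_insert w hrest (Set.toFinite _),
      Set.insert_sdiff_self_of_mem (G.mem_edgeSet.mpr hpq)]
  rw [edgeSet_sup, edgeSet_deleteEdges, edgeSet_edge_of_ne hab, Set.union_singleton,
    finsum_mem_insert w hnew' (Set.toFinite _), hsplit]
  abel

theorem weight_le_of_reachable_deleteEdges [Finite V] {M : Type*} [AddCommMonoid M]
    [PartialOrder M] [IsOrderedCancelAddMonoid M] (w : Sym2 V → M)
    (hmin : ∀ G : SimpleGraph V, G.Connected →
      ∑ᶠ e ∈ T.edgeSet, w e ≤ ∑ᶠ e ∈ G.edgeSet, w e)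
    (hT : T.Connected) (hpq : T.Adj p q) (hbridge : T.IsBridge s(p, q)) {a b : V}
    (ha : (T.deleteEdges {s(p, q)}).Reachable p a)
    (hb : (T.deleteEdges {s(p, q)}).Reachable q b) :
    w s(p, q) ≤ w s(a, b) := by
  set T₀ := T.deleteEdges {s(p, q)}
  have hcut : ¬ T₀.Reachable a b := fun hab => hbridge ((ha.trans hab).trans hb.symm)
  have hab : a ≠ b := fun h => hcut (h ▸ .rfl)
  have hab' : (T₀ ⊔ edge a b).Adj a b :=
    Or.inr ((edge_adj ..).mpr ⟨.inl ⟨rfl, rfl⟩, hab⟩)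
  have hconn : (T₀ ⊔ edge a b).Connected := by
    have hsup : T₀ ≤ T₀ ⊔ edge a b := le_sup_left
    have hpq' : (T₀ ⊔ edge a b).Reachable p q :=
      ((ha.mono hsup).trans hab'.reachable).trans (hb.mono hsup).symm
    refine (connected_iff_exists_forall_reachable _).mpr ⟨p, fun x => ?_⟩
    exact (hT.reachable_deleteEdges_or x).elim (·.mono hsup) (hpq'.trans <| ·.mono hsup)
  have hle := add_le_add_left (hmin _ hconn) (w s(p, q))
  rw [finsum_edgeSet_deleteEdges_sup_edge w hpq hab fun h => hcut h.reachable] at hle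
  exact le_of_add_le_add_left hle

end SimpleGraph

theorem IsEMST.dist_le_of_reachable_deleteEdges {P : Finset (EuclideanSpace ℝ (Fin 2))}
    {T : SimpleGraph ↥P} (hT : IsEMST P T) {p q a b : ↥P} (hpq : T.Adj p q)
    (ha : (T.deleteEdges {s(p, q)}).Reachable p a)
    (hb : (T.deleteEdges {s(p, q)}).Reachable q b) :
    dist (p : EuclideanSpace ℝ (Fin 2)) q ≤ dist (a : EuclideanSpace ℝ (Fin 2)) b :=
  SimpleGraph.weight_le_of_reachable_deleteEdges _ hT.2.2 hT.1 hpq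
    (SimpleGraph.isAcyclic_iff_forall_adj_isBridge.mp hT.2.1 hpq) ha hb

theorem setDist_le_dist {U V : Set (EuclideanSpace ℝ (Fin 2))} {u v : EuclideanSpace ℝ (Fin 2)}
    (hu : u ∈ U) (hv : v ∈ V) : setDist U V ≤ dist u v :=
  csInf_le ⟨0, Set.forall_mem_image2.mpr fun _ _ _ _ => dist_nonneg⟩
    (Set.mem_image2_of_mem hu hv)

theorem exists_dist_eq_setDist {U V : Set (EuclideanSpace ℝ (Fin 2))} (hU : U.Finite)
    (hV : V.Finite) (hU' : U.Nonempty) (hV' : V.Nonempty) :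
    ∃ u ∈ U, ∃ v ∈ V, dist u v = setDist U V :=
  (hU'.image2 hV').csInf_mem (hU.image2 _ hV)

theorem emst_cross_edge_is_closest_pair_general (P : Finset (EuclideanSpace ℝ (Fin 2)))
    (ε : ℝ) (hε1 : ε < 1)
    (U V : Set (EuclideanSpace ℝ (Fin 2)))
    (hUP : U ⊆ ↑P) (hVP : V ⊆ ↑P)
    (hws : max (Metric.diam U) (Metric.diam V) ≤ ε * setDist U V)
    (T : SimpleGraph ↥P) (hT : IsEMST P T)
    (p q : ↥P) (hp : (p : EuclideanSpace ℝ (Fin 2)) ∈ U)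
    (hq : (q : EuclideanSpace ℝ (Fin 2)) ∈ V) (hadj : T.Adj p q) :
    dist (p : EuclideanSpace ℝ (Fin 2)) (q : EuclideanSpace ℝ (Fin 2)) = setDist U V := by
  have hUfin : U.Finite := P.finite_toSet.subset hUP
  have hVfin : V.Finite := P.finite_toSet.subset hVP
  obtain ⟨u, hu, v, hv, huv⟩ := exists_dist_eq_setDist hUfin hVfin ⟨p, hp⟩ ⟨q, hq⟩
  have hεd : ε * setDist U V ≤ setDist U V :=
    mul_le_of_le_one_left (huv ▸ dist_nonneg) hε1.le
  have hcut : ∀ a b : ↥P, (T.deleteEdges {s(p, q)}).Reachable p a →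
      (T.deleteEdges {s(p, q)}).Reachable q b →
      dist (p : EuclideanSpace ℝ (Fin 2)) q ≤ dist (a : EuclideanSpace ℝ (Fin 2)) b :=
    fun _ _ => hT.dist_le_of_reachable_deleteEdges hadj
  refine le_antisymm ?_ (setDist_le_dist hp hq)
  rcases hT.1.reachable_deleteEdges_or (p := p) (q := q) ⟨v, hVP hv⟩ with hvp | hvq
  · calc _ ≤ dist v (q : EuclideanSpace ℝ (Fin 2)) := hcut ⟨v, hVP hv⟩ q hvp .rfl
      _ ≤ Metric.diam V := Metric.dist_le_diam_of_mem hVfin.isBounded hv hq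
      _ ≤ setDist U V := ((le_max_right _ _).trans hws).trans hεd
  rcases hT.1.reachable_deleteEdges_or (p := p) (q := q) ⟨u, hUP hu⟩ with hup | huq
  · exact huv ▸ hcut ⟨u, hUP hu⟩ ⟨v, hVP hv⟩ hup hvq
  · calc _ ≤ dist (p : EuclideanSpace ℝ (Fin 2)) u := hcut p ⟨u, hUP hu⟩ .rfl huq
      _ ≤ Metric.diam U := Metric.dist_le_diam_of_mem hUfin.isBounded hp hu
      _ ≤ setDist U V := ((le_max_left _ _).trans hws).trans hεd

/-- Let `P ⊆ ℝ²` be a finite set in which all pairwise distances between distinct points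
are distinct, let `ε ∈ (0,1)`, and let `U, V ⊆ P` be nonempty disjoint subsets that are
`ε`-well-separated. If a Euclidean minimum spanning tree of `P` contains an edge `{p, q}`
with `p ∈ U` and `q ∈ V`, then `(p, q)` is the closest pair between `U` and `V`. -/
theorem emst_cross_edge_is_closest_pair (P : Finset (EuclideanSpace ℝ (Fin 2)))
    (hdist : ∀ p ∈ P, ∀ q ∈ P, ∀ r ∈ P, ∀ s ∈ P,
      p ≠ q → r ≠ s → dist p q = dist r s →
        ({p, q} : Set (EuclideanSpace ℝ (Fin 2))) = {r, s})
    (ε : ℝ) (hε0 : 0 < ε) (hε1 : ε < 1)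
    (U V : Set (EuclideanSpace ℝ (Fin 2)))
    (hUP : U ⊆ ↑P) (hVP : V ⊆ ↑P)
    (hU : U.Nonempty) (hV : V.Nonempty) (hUV : U ∩ V = ∅)
    (hws : max (Metric.diam U) (Metric.diam V) ≤ ε * setDist U V)
    (T : SimpleGraph ↥P) (hT : IsEMST P T)
    (p q : ↥P) (hp : (p : EuclideanSpace ℝ (Fin 2)) ∈ U)
    (hq : (q : EuclideanSpace ℝ (Fin 2)) ∈ V) (hadj : T.Adj p q) :
    dist (p : EuclideanSpace ℝ (Fin 2)) (q : EuclideanSpace ℝ (Fin 2)) = setDist U V :=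
  emst_cross_edge_is_closest_pair_general P ε hε1 U V hUP hVP hws T hT p q hp hq hadj
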